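/- (Explicit value of the singular integral v₀, Lemma 3.1.) For every γ ≥ 1 and every θ ∈ ℝ, the absolutely convergent improper integral (1/(4π))·∫₀^{2π} ln(M(0)(θ,θ'))·cos(θ'−θ) dθ' (the integrand has only a logarithmic singularity at θ' = θ) equals (1/2)·( −1 + ((1−γ)/(1+γ))·cos(2θ) ) = −(1/(1+γ))·( γcos²θ + sin²θ ). -/

import Mathlib

/-!
With `ρ = (γ - 1)/(γ + 1)` the quadratic form factors as
`M(0)(θ,θ') = |e^{iθ'} - e^{iθ}|² · (γ + 1)²/(4γ) · |e^{i(θ + θ')} - ρ|²`,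
so `log M(0)` splits into the logarithmic singularity `log (2 - 2 cos (θ' - θ))`, a constant and the
smooth term `log (1 - 2ρ cos (θ' + θ) + ρ²)`. Their first Fourier coefficients against
`cos (θ' - θ)` are `-2π`, `0` and `-2πρ cos 2θ`. For the two nonconstant terms, integrating by
parts against `sin` leaves rational functions of `cos`; for the smooth term these reduce to the
Poisson kernel integral `∫ (1 - ρ²)/(1 - 2ρ cos x + ρ²) = 2π`, which is the Poisson formula for
the constant function `1`.
-/

open Real MeasureTheory Set

/-- `M(0)(θ,θ') := γ(cos θ − cos θ')² + γ⁻¹(sin θ − sin θ')²`. -/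
noncomputable def M0 (γ θ θ' : ℝ) : ℝ :=
  γ * (Real.cos θ - Real.cos θ') ^ 2 + γ⁻¹ * (Real.sin θ - Real.sin θ') ^ 2

lemma sq_norm_exp_mul_I_sub (x θ r : ℝ) :
    ‖Complex.exp (x * Complex.I) - r * Complex.exp (θ * Complex.I)‖ ^ 2
      = 1 - 2 * r * cos (x - θ) + r ^ 2 := by
  rw [Complex.sq_norm, Complex.normSq_apply]
  simp [Complex.exp_ofReal_mul_I_re, Complex.exp_ofReal_mul_I_im, cos_sub]
  nlinarith [sin_sq_add_cos_sq x, sin_sq_add_cos_sq θ]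

lemma poisson_denom_pos {ρ : ℝ} (hρ : |ρ| < 1) (x : ℝ) : 0 < 1 - 2 * ρ * cos x + ρ ^ 2 := by
  obtain ⟨h₁, h₂⟩ := abs_lt.mp hρ
  rcases le_total 0 ρ with h | h
  · nlinarith [mul_nonneg h (sub_nonneg.2 (cos_le_one x))]
  · nlinarith [mul_nonneg (neg_nonneg.2 h) (neg_le_iff_add_nonneg.1 (neg_one_le_cos x))]

lemma ae_cos_sub_ne_one (θ : ℝ) : ∀ᵐ x, cos (x - θ) ≠ 1 := by
  refine ((Set.countable_range fun n : ℤ => θ + n * (2 * π)).ae_notMem volume).mono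
    fun x hx h => hx ?_
  obtain ⟨n, hn⟩ := (cos_eq_one_iff _).mp h
  exact ⟨n, by linarith⟩

lemma Function.Periodic.intervalIntegral_comp_add_right {f : ℝ → ℝ} {T : ℝ}
    (hf : Function.Periodic f T) (s : ℝ) :
    ∫ x in 0..T, f (x + s) = ∫ x in 0..T, f x := by
  simpa [add_comm T] using hf.intervalIntegral_add_eq s 0

lemma integral_comp_cos_mul_sin (f : ℝ → ℝ) : ∫ x in 0..2 * π, f (cos x) * sin x = 0 := by
  have h := intervalIntegral.integral_comp_sub_left (fun x => f (cos x) * sin x) (2 * π)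
    (a := 0) (b := 2 * π)
  simp only [cos_two_pi_sub, sin_two_pi_sub, mul_neg, intervalIntegral.integral_neg, sub_self,
    sub_zero] at h
  linarith

lemma integral_poissonKernel {ρ : ℝ} (hρ : |ρ| < 1) :
    ∫ x in 0..2 * π, (1 - ρ ^ 2) / (1 - 2 * ρ * cos x + ρ ^ 2) = 2 * π := by
  have h := diffContOnCl_const.circleAverage_poissonKernel_smul'
    (f := fun _ => (1 : ℂ)) (w := (ρ : ℂ)) (c := 0) (R := 1) (by simpa using hρ)
  have hnorm (x : ℝ) := sq_norm_exp_mul_I_sub x 0 ρ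
  simp only [Complex.ofReal_zero, zero_mul, Complex.exp_zero, mul_one, sub_zero] at hnorm
  simp only [circleAverage_def, circleMap, sub_zero, zero_add, Complex.ofReal_one, one_mul,
    Complex.norm_exp_ofReal_mul_I, Complex.norm_real, norm_eq_abs, sq_abs, hnorm,
    Complex.real_smul, mul_one, one_pow, intervalIntegral.integral_ofReal, ← Complex.ofReal_mul,
    Complex.ofReal_eq_one] at h
  rw [← (inv_mul_eq_one₀ (by positivity)).mp h]

lemma integral_mul_sin_sq_div_poisson_denom {ρ : ℝ} (hρ : |ρ| < 1) :
    ∫ x in 0..2 * π, 2 * ρ * sin x ^ 2 / (1 - 2 * ρ * cos x + ρ ^ 2) = 2 * π * ρ := by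
  rcases eq_or_ne ρ 0 with rfl | hρ₀
  · simp
  have hD := poisson_denom_pos hρ
  -- division of `1 - cos² x` by the denominator, as a polynomial in `cos x`
  have hdiv (x : ℝ) : 2 * ρ * sin x ^ 2 / (1 - 2 * ρ * cos x + ρ ^ 2)
      = ((1 + ρ ^ 2) + 2 * ρ * cos x
          - (1 - ρ ^ 2) * ((1 - ρ ^ 2) / (1 - 2 * ρ * cos x + ρ ^ 2))) / (2 * ρ) := by
    field_simp [(hD x).ne']
    linear_combination (4 * ρ ^ 2) * sin_sq_add_cos_sq x
  have hcont : Continuous fun x => (1 - ρ ^ 2) / (1 - 2 * ρ * cos x + ρ ^ 2) :=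
    continuous_const.div (by fun_prop) fun x => (hD x).ne'
  simp_rw [hdiv]
  rw [intervalIntegral.integral_div, intervalIntegral.integral_sub, intervalIntegral.integral_add,
    intervalIntegral.integral_const_mul, intervalIntegral.integral_const_mul,
    intervalIntegral.integral_const, integral_cos, integral_poissonKernel hρ]
  · simp only [sin_two_pi, sin_zero, sub_zero, smul_eq_mul]
    field_simp
    ring
  all_goals exact Continuous.intervalIntegrable (by fun_prop) _ _

lemma integral_log_poisson_denom_mul_cos {ρ : ℝ} (hρ : |ρ| < 1) :
    ∫ x in 0..2 * π, log (1 - 2 * ρ * cos x + ρ ^ 2) * cos x = -(2 * π * ρ) := by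
  have hD := poisson_denom_pos hρ
  have hlog (x : ℝ) : HasDerivAt (fun x => log (1 - 2 * ρ * cos x + ρ ^ 2))
      (2 * ρ * sin x / (1 - 2 * ρ * cos x + ρ ^ 2)) x := by
    have := (((hasDerivAt_cos x).const_mul (2 * ρ)).const_sub 1).add_const (ρ ^ 2)
    exact (this.log (hD x).ne').congr_deriv (by ring)
  rw [intervalIntegral.integral_mul_deriv_eq_deriv_mul (fun x _ => hlog x)
      (fun x _ => hasDerivAt_sin x) ?_ (continuous_cos.intervalIntegrable _ _)]
  · simp only [sin_two_pi, sin_zero, mul_zero, sub_zero, zero_sub, neg_inj]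
    rw [← integral_mul_sin_sq_div_poisson_denom hρ]
    congr 1 with x
    ring
  · exact (continuous_const.mul continuous_sin).div (by fun_prop) (fun x => (hD x).ne')
      |>.intervalIntegrable _ _

lemma integral_log_poisson_denom_mul_cos_sub {ρ : ℝ} (hρ : |ρ| < 1) (φ : ℝ) :
    ∫ x in 0..2 * π, log (1 - 2 * ρ * cos x + ρ ^ 2) * cos (x - φ)
      = -(2 * π * ρ * cos φ) := by
  have hcont : Continuous fun x => log (1 - 2 * ρ * cos x + ρ ^ 2) :=
    (by fun_prop : Continuous fun x => 1 - 2 * ρ * cos x + ρ ^ 2).log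
      fun x => (poisson_denom_pos hρ x).ne'
  simp_rw [cos_sub, mul_add, ← mul_assoc]
  rw [intervalIntegral.integral_add, intervalIntegral.integral_mul_const,
    intervalIntegral.integral_mul_const, integral_log_poisson_denom_mul_cos hρ,
    integral_comp_cos_mul_sin fun c => log (1 - 2 * ρ * c + ρ ^ 2)]
  · ring
  all_goals exact Continuous.intervalIntegrable (by fun_prop) _ _

lemma intervalIntegrable_log_two_sub_two_cos_sub (θ : ℝ) :
    IntervalIntegrable (fun x => log (2 - 2 * cos (x - θ))) volume 0 (2 * π) := by
  have h := (circleIntegrable_log_norm_sub_const (a := Complex.exp (θ * Complex.I))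
    (c := 0) 1).const_mul 2
  refine h.congr fun x _ => ?_
  have hn := sq_norm_exp_mul_I_sub x θ 1
  simp only [circleMap, zero_add, Complex.ofReal_one, one_mul, one_pow] at hn ⊢
  rw [show 2 - 2 * cos (x - θ) = ‖Complex.exp (x * Complex.I) - Complex.exp (θ * Complex.I)‖ ^ 2
    by rw [hn]; ring, log_pow]
  norm_num

lemma continuous_log_two_sub_two_cos_mul_sin :
    Continuous fun x => log (2 - 2 * cos x) * sin x := by
  -- `2 - 2 cos x = 4 sin² (x/2)`, and `t ↦ t log t` is continuous at `0`
  have h (x : ℝ) : log (2 - 2 * cos x) * sin x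
      = 2 * cos (x / 2) * (log 4 * sin (x / 2) + 2 * (sin (x / 2) * log (sin (x / 2)))) := by
    have hc : 2 - 2 * cos x = 4 * sin (x / 2) ^ 2 := by
      have h2 := cos_two_mul (x / 2)
      rw [show 2 * (x / 2) = x by ring] at h2
      linear_combination (-2 : ℝ) * h2 - 4 * sin_sq_add_cos_sq (x / 2)
    have hs : sin x = 2 * sin (x / 2) * cos (x / 2) := by rw [← sin_two_mul]; ring_nf
    rw [hc, hs]
    rcases eq_or_ne (sin (x / 2)) 0 with hs | hs
    · simp [hs]
    · rw [log_mul (by norm_num) (pow_ne_zero 2 hs), log_pow]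
      ring
  simp_rw [h]
  have := continuous_mul_log.comp (continuous_sin.comp (continuous_id.div_const 2))
  fun_prop

lemma integral_log_two_sub_two_cos_mul_cos :
    ∫ x in 0..2 * π, log (2 - 2 * cos x) * cos x = -(2 * π) := by
  have hderiv : ∀ x ∈ Ioo 0 (2 * π), HasDerivAt
      (fun x => log (2 - 2 * cos x) * sin x - (x + sin x)) (log (2 - 2 * cos x) * cos x) x := by
    rintro x ⟨h₀, h₂π⟩
    have hc : cos x ≠ 1 := fun h =>
      h₀.ne' ((cos_eq_one_iff_of_lt_of_lt (by linarith) h₂π).mp h)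
    have hpos : 2 - 2 * cos x ≠ 0 := fun h => hc (by linarith)
    have hlog := (((hasDerivAt_cos x).const_mul 2).const_sub 2).log hpos
    refine ((hlog.mul (hasDerivAt_sin x)).sub
      ((hasDerivAt_id x).add (hasDerivAt_sin x))).congr_deriv ?_
    field_simp
    linear_combination sin_sq_add_cos_sq x
  have hint := (intervalIntegrable_log_two_sub_two_cos_sub 0).mul_continuousOn
    continuous_cos.continuousOn
  simp only [sub_zero] at hint
  rw [intervalIntegral.integral_eq_sub_of_hasDerivAt_of_le (by positivity)
    ((continuous_log_two_sub_two_cos_mul_sin.sub (by fun_prop)).continuousOn) hderiv hint]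
  simp

lemma integral_log_two_sub_two_cos_sub_mul_cos_sub (θ : ℝ) :
    ∫ x in 0..2 * π, log (2 - 2 * cos (x - θ)) * cos (x - θ) = -(2 * π) := by
  have hper : Function.Periodic (fun x => log (2 - 2 * cos x) * cos x) (2 * π) := fun x => by
    simp only [cos_add_two_pi]
  simpa only [← sub_eq_add_neg, integral_log_two_sub_two_cos_mul_cos]
    using hper.intervalIntegral_comp_add_right (-θ)

lemma integral_log_poisson_denom_add_mul_cos_sub {ρ : ℝ} (hρ : |ρ| < 1) (θ : ℝ) :
    ∫ x in 0..2 * π, log (1 - 2 * ρ * cos (x + θ) + ρ ^ 2) * cos (x - θ)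
      = -(2 * π * ρ * cos (2 * θ)) := by
  have hper : Function.Periodic
      (fun x => log (1 - 2 * ρ * cos x + ρ ^ 2) * cos (x - 2 * θ)) (2 * π) := fun x => by
    simp only [cos_add_two_pi, add_sub_right_comm x (2 * π)]
  have h := hper.intervalIntegral_comp_add_right θ
  rw [integral_log_poisson_denom_mul_cos_sub hρ] at h
  rw [← h]
  congr 1 with x
  ring_nf

lemma abs_sub_one_div_add_one_lt_one {γ : ℝ} (hγ : 0 < γ) : |(γ - 1) / (γ + 1)| < 1 := by
  rw [abs_div, abs_of_pos (by linarith : 0 < γ + 1), div_lt_one (by linarith), abs_sub_lt_iff]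
  constructor <;> linarith

lemma M0_eq_mul {γ : ℝ} (hγ : 0 < γ) (θ θ' : ℝ) :
    M0 γ θ θ' = (2 - 2 * cos (θ' - θ)) * ((γ + 1) ^ 2 / (4 * γ))
      * (1 - 2 * ((γ - 1) / (γ + 1)) * cos (θ' + θ) + ((γ - 1) / (γ + 1)) ^ 2) := by
  have h : M0 γ θ θ' = (2 - 2 * cos (θ' - θ)) * ((γ + γ⁻¹) / 2 - (γ - γ⁻¹) / 2 * cos (θ' + θ)) := by
    rw [M0, cos_sub, cos_add]
    linear_combination (γ⁻¹ + (γ - γ⁻¹) * sin θ' ^ 2) * sin_sq_add_cos_sq θ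
      + (γ⁻¹ + (γ - γ⁻¹) * (1 - cos θ ^ 2)) * sin_sq_add_cos_sq θ'
  rw [h]
  field_simp
  ring

lemma log_M0_eq {γ : ℝ} (hγ : 0 < γ) {θ θ' : ℝ} (h : cos (θ' - θ) ≠ 1) :
    log (M0 γ θ θ') = log (2 - 2 * cos (θ' - θ)) + log ((γ + 1) ^ 2 / (4 * γ))
      + log (1 - 2 * ((γ - 1) / (γ + 1)) * cos (θ' + θ) + ((γ - 1) / (γ + 1)) ^ 2) := by
  rw [M0_eq_mul hγ, log_mul, log_mul]
  · exact fun h' => h (by linarith)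
  · positivity
  · exact mul_ne_zero (fun h' => h (by linarith)) (by positivity)
  · exact (poisson_denom_pos (abs_sub_one_div_add_one_lt_one hγ) _).ne'

theorem v0_value (γ : ℝ) (hγ : 1 ≤ γ) (θ : ℝ) :
    -- the improper integral is absolutely convergent
    IntervalIntegrable (fun θ' => Real.log (M0 γ θ θ') * Real.cos (θ' - θ))
      volume 0 (2 * π) ∧
    -- its value
    (1 / (4 * π)) * (∫ θ' in (0:ℝ)..(2 * π), Real.log (M0 γ θ θ') * Real.cos (θ' - θ))
      = (1 / 2) * (-1 + ((1 - γ) / (1 + γ)) * Real.cos (2 * θ)) ∧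
    -- the two closed forms agree
    (1 / 2) * (-1 + ((1 - γ) / (1 + γ)) * Real.cos (2 * θ))
      = -(1 / (1 + γ)) * (γ * Real.cos θ ^ 2 + Real.sin θ ^ 2) := by
  have hγ₀ : 0 < γ := by linarith
  set ρ := (γ - 1) / (γ + 1)
  have hρ : |ρ| < 1 := abs_sub_one_div_add_one_lt_one hγ₀
  have hcos : Continuous fun x => cos (x - θ) := by fun_prop
  have hsing := (intervalIntegrable_log_two_sub_two_cos_sub θ).mul_continuousOn hcos.continuousOn
  have hconst : IntervalIntegrable (fun x => log ((γ + 1) ^ 2 / (4 * γ)) * cos (x - θ))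
      volume 0 (2 * π) := Continuous.intervalIntegrable (by fun_prop) _ _
  have hsmooth : IntervalIntegrable (fun x => log (1 - 2 * ρ * cos (x + θ) + ρ ^ 2) * cos (x - θ))
      volume 0 (2 * π) :=
    (((by fun_prop : Continuous fun x => 1 - 2 * ρ * cos (x + θ) + ρ ^ 2).log
      fun x => (poisson_denom_pos hρ _).ne').mul hcos).intervalIntegrable _ _
  have hsplit : ∀ᵐ θ', log (2 - 2 * cos (θ' - θ)) * cos (θ' - θ)
      + log ((γ + 1) ^ 2 / (4 * γ)) * cos (θ' - θ)
      + log (1 - 2 * ρ * cos (θ' + θ) + ρ ^ 2) * cos (θ' - θ)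
      = log (M0 γ θ θ') * cos (θ' - θ) :=
    (ae_cos_sub_ne_one θ).mono fun θ' h => by rw [log_M0_eq hγ₀ h]; ring
  refine ⟨((hsing.add hconst).add hsmooth).congr_ae (ae_restrict_of_ae hsplit), ?_, ?_⟩
  · rw [← intervalIntegral.integral_congr_ae (hsplit.mono fun x h _ => h),
      intervalIntegral.integral_add (hsing.add hconst) hsmooth,
      intervalIntegral.integral_add hsing hconst, intervalIntegral.integral_const_mul,
      intervalIntegral.integral_comp_sub_right (fun x => cos x), integral_cos,
      integral_log_two_sub_two_cos_sub_mul_cos_sub, integral_log_poisson_denom_add_mul_cos_sub hρ]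
    simp only [sin_sub, sin_two_pi, cos_two_pi, zero_sub, sin_neg, ρ]
    field_simp
    ring
  · rw [cos_two_mul]
    field_simp
    linear_combination 2 * sin_sq_add_cos_sq θ
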